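/- arXiv:1605.09601 — 3 statements merged into one kernel-verified Lean document; each statement's English description precedes it below -/
import Mathlib

section
/- Let ρ > 1, Q > 0, and let integers M ≤ N be given with N ≥ 1. Let f : [-1,1] → ℝ be given by a uniformly convergent Chebyshev series f(x) = Σ_{n≥0} a_n T_n(x) with |a_0| ≤ Q and |a_n| ≤ 2Q ρ^{-n} for n ≥ 1. Let c ∈ ℝ^{M+1} be the solution of the (unperturbed) normal equations T_M(x^{equi})ᵀ T_M(x^{equi}) c = T_M(x^{equi})ᵀ f(x^{equi}). Then for every 0 ≤ k ≤ M, |c_k| ≤ 2Q [ ρ^{-k} + ((N+1)^{1/2} / σ_{M+1}(T_M(x^{equi}))) · ρ^{-M}/(ρ−1) ]. -/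
open Matrix MeasureTheory
open scoped BigOperators

/-- Chebyshev polynomial of the first kind `T_n`, as a function `ℝ → ℝ`. -/
noncomputable def cheb (n : ℕ) (x : ℝ) : ℝ :=
  (Polynomial.Chebyshev.T ℝ (n : ℤ)).eval x

/-- The equally spaced grid `x_k = 2k/N - 1`, `k = 0, …, N`, on `[-1,1]`. -/
noncomputable def xequi (N : ℕ) (k : Fin (N + 1)) : ℝ :=
  2 * (k : ℝ) / (N : ℝ) - 1

/-- The `(N+1) × (M+1)` Chebyshev–Vandermonde matrix at the equally spaced grid. -/
noncomputable def chebVand (N M : ℕ) : Matrix (Fin (N + 1)) (Fin (M + 1)) ℝ :=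
  Matrix.of fun i j => cheb (j : ℕ) (xequi N i)

/-- The Euclidean norm of a vector in `ℝ^n`. -/
noncomputable def enorm2 {n : ℕ} (v : Fin n → ℝ) : ℝ :=
  Real.sqrt (∑ i, (v i) ^ 2)

/-- The smallest singular value of a matrix, as the infimum of `‖A v‖₂` over unit vectors. -/
noncomputable def sigmaMin {m n : ℕ} (A : Matrix (Fin m) (Fin n) ℝ) : ℝ :=
  sInf {r | ∃ v : Fin n → ℝ, enorm2 v = 1 ∧ r = enorm2 (A.mulVec v)}

/-- The largest singular value of a matrix, as the supremum of `‖A v‖₂` over unit vectors. -/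
noncomputable def sigmaMax {m n : ℕ} (A : Matrix (Fin m) (Fin n) ℝ) : ℝ :=
  sSup {r | ∃ v : Fin n → ℝ, enorm2 v = 1 ∧ r = enorm2 (A.mulVec v)}

/-!
Let `b` be the truncation `(a_0, …, a_M)` of the Chebyshev coefficients. Since `|T_n| ≤ 1` on
`[-1,1]`, the residual `f(x^equi) - T_M(x^equi) b` has entries at most the geometric tail
`2Q ρ^{-M}/(ρ-1)`, hence Euclidean norm at most `√(N+1)` times that. The normal equations make
`T_M(x^equi)(c - b)` the orthogonal projection of this residual onto the column space, so it is
no longer than the residual, and dividing by `σ_{M+1}` bounds `‖c - b‖₂`. The smallest singular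
value is positive because a nonzero polynomial of degree `≤ M ≤ N` cannot vanish at the `N + 1`
distinct grid points. Finally `|c_k| ≤ |a_k| + ‖c - b‖₂`.
-/

open Polynomial

theorem Polynomial.Sequence.eq_zero_of_forall_sum_mul_eval_eq_zero {R : Type*} [CommRing R]
    [IsDomain R] (S : Polynomial.Sequence R) {ι : Type*} [Fintype ι] {x : ι → R}
    (hx : Function.Injective x) {m : ℕ} (hm : m < Fintype.card ι) {v : Fin (m + 1) → R}
    (hv : ∀ i, ∑ j, v j * (S j).eval (x i) = 0) : v = 0 := by
  have hdeg : (∑ j, v j • S j).natDegree ≤ m :=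
    natDegree_sum_le_of_forall_le _ _ fun j _ =>
      (natDegree_smul_le _ _).trans ((S.natDegree_eq j).trans_le (Nat.lt_succ_iff.mp j.2))
  have hzero : ∑ j, v j • S j = 0 :=
    eq_zero_of_natDegree_lt_card_of_eval_eq_zero _ hx
      (fun i => by simpa [eval_finsetSum] using hv i) (hdeg.trans_lt hm)
  funext j
  exact Fintype.linearIndependent_iff.mp (S.linearIndependent.comp _ Fin.val_injective) v hzero j

theorem xequi_injective (N : ℕ) : Function.Injective (xequi N) := by
  intro i j h
  rcases N.eq_zero_or_pos with rfl | hN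
  · exact Subsingleton.elim (α := Fin 1) i j
  · have hN' : (N : ℝ) ≠ 0 := by positivity
    rw [xequi, xequi, sub_left_inj, div_left_inj' hN', mul_right_inj' two_ne_zero,
      Nat.cast_inj] at h
    exact Fin.ext h

theorem xequi_mem_Icc (N : ℕ) (i : Fin (N + 1)) : xequi N i ∈ Set.Icc (-1 : ℝ) 1 := by
  have hi : 2 * (i : ℝ) / N ≤ 2 :=
    div_le_of_le_mul₀ (Nat.cast_nonneg N) zero_le_two
      (by have : (i : ℝ) ≤ N := by exact_mod_cast Nat.lt_succ_iff.mp i.2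
          linarith)
  constructor <;> unfold xequi
  · have : 0 ≤ 2 * (i : ℝ) / N := by positivity
    linarith
  · linarith

theorem chebVand_mulVec_apply (N M : ℕ) (v : Fin (M + 1) → ℝ) (i : Fin (N + 1)) :
    (chebVand N M *ᵥ v) i = ∑ j, v j * cheb j (xequi N i) := by
  simp only [mulVec, dotProduct, chebVand, of_apply, mul_comm]

theorem chebVand_mulVec_eq_zero {N M : ℕ} (hMN : M ≤ N) {v : Fin (M + 1) → ℝ}
    (hv : chebVand N M *ᵥ v = 0) : v = 0 :=
  (Chebyshev.chebyshevTsequence ℝ).eq_zero_of_forall_sum_mul_eval_eq_zero (xequi_injective N)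
    (by simpa using Nat.lt_succ_of_le hMN)
    fun i => by
      simpa [chebVand_mulVec_apply, cheb, Chebyshev.chebyshevTsequence] using congrFun hv i

theorem abs_sub_sum_range_le_of_hasSum {g : ℕ → ℝ} {s C ρ : ℝ} (hρ : 1 < ρ) (M : ℕ)
    (hs : HasSum g s) (hg : ∀ n, M < n → |g n| ≤ C * ρ ^ (-(n : ℤ))) :
    |s - ∑ n ∈ Finset.range (M + 1), g n| ≤ C * ρ ^ (-(M : ℤ)) / (ρ - 1) := by
  have hρ0 : ρ ≠ 0 := by positivity
  have hpow (k : ℕ) : ρ ^ (-(k : ℤ)) = ρ⁻¹ ^ k := by rw [_root_.zpow_neg, zpow_natCast, inv_pow]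
  have htail : HasSum (fun n => g (n + (M + 1))) (s - ∑ n ∈ Finset.range (M + 1), g n) :=
    (hasSum_nat_add_iff' (M + 1)).mpr hs
  have hgeom : HasSum (fun n : ℕ => C * ρ⁻¹ ^ (M + 1) * ρ⁻¹ ^ n)
      (C * ρ ^ (-(M : ℤ)) / (ρ - 1)) := by
    have hsum : C * ρ ^ (-(M : ℤ)) / (ρ - 1) = C * ρ⁻¹ ^ (M + 1) * (1 - ρ⁻¹)⁻¹ := by
      have : ρ - 1 ≠ 0 := by linarith
      rw [hpow, inv_pow, inv_pow, pow_succ]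
      field_simp
    rw [hsum]
    exact (hasSum_geometric_of_lt_one (inv_nonneg.2 (by linarith))
      (inv_lt_one_of_one_lt₀ hρ)).mul_left _
  refine htail.norm_le_of_bounded hgeom fun n => ?_
  rw [Real.norm_eq_abs, mul_assoc, ← pow_add, ← hpow, add_comm]
  exact_mod_cast hg _ (by omega)

theorem abs_cheb_le_one (n : ℕ) {x : ℝ} (hx : x ∈ Set.Icc (-1 : ℝ) 1) : |cheb n x| ≤ 1 :=
  Chebyshev.abs_eval_T_real_le_one n (abs_le.mpr hx)

theorem abs_sub_sum_range_mul_cheb_le {a : ℕ → ℝ} {x s C ρ : ℝ} (hρ : 1 < ρ) (M : ℕ)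
    (hx : x ∈ Set.Icc (-1 : ℝ) 1) (hs : HasSum (fun n => a n * cheb n x) s)
    (ha : ∀ n, M < n → |a n| ≤ C * ρ ^ (-(n : ℤ))) :
    |s - ∑ n ∈ Finset.range (M + 1), a n * cheb n x| ≤ C * ρ ^ (-(M : ℤ)) / (ρ - 1) :=
  abs_sub_sum_range_le_of_hasSum hρ M hs fun n hn => by
    rw [abs_mul]
    exact (mul_le_of_le_one_right (abs_nonneg _) (abs_cheb_le_one n hx)).trans (ha n hn)

section Euclidean

variable {m n : ℕ}

theorem enorm2_eq_norm (v : Fin n → ℝ) : enorm2 v = ‖WithLp.toLp 2 v‖ := by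
  simp [enorm2, EuclideanSpace.norm_eq]

theorem enorm2_nonneg (v : Fin n → ℝ) : 0 ≤ enorm2 v := Real.sqrt_nonneg _

theorem enorm2_sq (v : Fin n → ℝ) : enorm2 v ^ 2 = v ⬝ᵥ v := by
  rw [enorm2, Real.sq_sqrt (by positivity), dotProduct]
  simp only [sq]

theorem abs_le_enorm2 (v : Fin n → ℝ) (i : Fin n) : |v i| ≤ enorm2 v := by
  rw [enorm2, ← Real.sqrt_sq_eq_abs]
  exact Real.sqrt_le_sqrt (Finset.single_le_sum (fun j _ => sq_nonneg (v j)) (Finset.mem_univ i))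

theorem enorm2_le_sqrt_mul_of_forall_abs_le {v : Fin n → ℝ} {D : ℝ} (hD : ∀ i, |v i| ≤ D) :
    enorm2 v ≤ √n * D := by
  rcases n.eq_zero_or_pos with rfl | hn
  · simp [enorm2]
  have hD0 : 0 ≤ D := (abs_nonneg _).trans (hD ⟨0, hn⟩)
  calc enorm2 v ≤ √(∑ _i : Fin n, D ^ 2) :=
        Real.sqrt_le_sqrt (Finset.sum_le_sum fun i _ => sq_le_sq' (abs_le.mp (hD i)).1
          (abs_le.mp (hD i)).2)
    _ = √n * D := by simp [Real.sqrt_mul (Nat.cast_nonneg n), Real.sqrt_sq hD0]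

theorem dotProduct_le_enorm2_mul (v w : Fin n → ℝ) : v ⬝ᵥ w ≤ enorm2 v * enorm2 w :=
  Real.sum_mul_le_sqrt_mul_sqrt _ _ _

theorem sigmaMin_mul_enorm2_le (A : Matrix (Fin m) (Fin n) ℝ) (v : Fin n → ℝ) :
    sigmaMin A * enorm2 v ≤ enorm2 (A *ᵥ v) := by
  rcases (enorm2_nonneg v).eq_or_lt with h0 | hpos
  · rw [← h0, mul_zero]
    exact enorm2_nonneg _
  have hunit : enorm2 ((enorm2 v)⁻¹ • v) = 1 := by
    rw [enorm2_eq_norm, WithLp.toLp_smul, norm_smul, ← enorm2_eq_norm, Real.norm_eq_abs,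
      abs_of_pos (inv_pos.mpr hpos), inv_mul_cancel₀ hpos.ne']
  have hle : sigmaMin A ≤ enorm2 (A *ᵥ ((enorm2 v)⁻¹ • v)) :=
    csInf_le ⟨0, fun _ ⟨_, _, hr⟩ => hr ▸ enorm2_nonneg _⟩ ⟨_, hunit, rfl⟩
  rw [mulVec_smul, enorm2_eq_norm, WithLp.toLp_smul, norm_smul, ← enorm2_eq_norm,
    Real.norm_eq_abs, abs_of_pos (inv_pos.mpr hpos)] at hle
  rwa [le_inv_mul_iff₀ hpos, mul_comm] at hle

theorem sigmaMin_pos [NeZero n] {A : Matrix (Fin m) (Fin n) ℝ}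
    (hA : ∀ v, A *ᵥ v = 0 → v = 0) : 0 < sigmaMin A := by
  obtain ⟨K, hK, hanti⟩ := (Matrix.toLpLin 2 2 A).injective_iff_antilipschitz.mp
    ((injective_iff_map_eq_zero _).mpr fun v hv =>
      WithLp.ofLp_injective 2 (hA _ (by simpa using congrArg WithLp.ofLp hv)))
  refine lt_of_lt_of_le (by positivity : (0 : ℝ) < (K : ℝ)⁻¹) (le_csInf ?_ ?_)
  · exact ⟨_, Pi.single 0 1, by simp [enorm2, Pi.single_apply, ite_pow], rfl⟩
  · rintro _ ⟨v, hv, rfl⟩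
    have := hanti.le_mul_dist (WithLp.toLp 2 v) 0
    rw [dist_zero_right, map_zero, dist_zero_right, ← enorm2_eq_norm, hv, toLpLin_toLp,
      toLin'_apply, ← enorm2_eq_norm] at this
    exact (inv_le_iff_one_le_mul₀' (NNReal.coe_pos.mpr hK)).mpr this

theorem enorm2_mulVec_sub_le_of_normal_eq {A : Matrix (Fin m) (Fin n) ℝ} {c : Fin n → ℝ}
    {y : Fin m → ℝ} (hc : (Aᵀ * A) *ᵥ c = Aᵀ *ᵥ y) (b : Fin n → ℝ) :
    enorm2 (A *ᵥ (c - b)) ≤ enorm2 (y - A *ᵥ b) := by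
  set w := A *ᵥ (c - b)
  set r := y - A *ᵥ b
  have horth : Aᵀ *ᵥ w = Aᵀ *ᵥ r := by
    simp only [w, r, mulVec_sub, mulVec_mulVec, hc]
  have hsq : enorm2 w ^ 2 ≤ enorm2 w * enorm2 r := calc
    enorm2 w ^ 2 = (c - b) ⬝ᵥ (Aᵀ *ᵥ w) := by
      rw [enorm2_sq, dotProduct_mulVec (c - b), vecMul_transpose]
    _ = (c - b) ⬝ᵥ (Aᵀ *ᵥ r) := by rw [horth]
    _ = w ⬝ᵥ r := by rw [dotProduct_mulVec (c - b), vecMul_transpose]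
    _ ≤ enorm2 w * enorm2 r := dotProduct_le_enorm2_mul w r
  nlinarith [enorm2_nonneg w, enorm2_nonneg r]

theorem enorm2_sub_le_of_normal_eq {A : Matrix (Fin m) (Fin n) ℝ} (hA : 0 < sigmaMin A)
    {c : Fin n → ℝ} {y : Fin m → ℝ} (hc : (Aᵀ * A) *ᵥ c = Aᵀ *ᵥ y) (b : Fin n → ℝ) :
    enorm2 (c - b) ≤ enorm2 (y - A *ᵥ b) / sigmaMin A := by
  rw [le_div_iff₀ hA, mul_comm]
  exact (sigmaMin_mul_enorm2_le A _).trans (enorm2_mulVec_sub_le_of_normal_eq hc b)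

end Euclidean

theorem least_squares_coefficient_bound_general (ρ Q : ℝ) (hρ : 1 < ρ) (hQ : 0 < Q)
    (M N : ℕ) (hMN : M ≤ N)
    (f : ℝ → ℝ) (a : ℕ → ℝ)
    (hf : ∀ x ∈ Set.Icc (-1 : ℝ) 1, HasSum (fun n : ℕ => a n * cheb n x) (f x))
    (ha0 : |a 0| ≤ Q)
    (ha : ∀ n : ℕ, 1 ≤ n → |a n| ≤ 2 * Q * ρ ^ (-(n : ℤ)))
    (c : Fin (M + 1) → ℝ)
    (hc : ((chebVand N M).transpose * chebVand N M) *ᵥ c =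
      (chebVand N M).transpose *ᵥ (fun i => f (xequi N i))) :
    ∀ k : Fin (M + 1),
      |c k| ≤ 2 * Q * (ρ ^ (-((k : ℕ) : ℤ)) +
        Real.sqrt ((N : ℝ) + 1) / sigmaMin (chebVand N M) * (ρ ^ (-(M : ℤ)) / (ρ - 1))) := by
  intro k
  set D := 2 * Q * ρ ^ (-(M : ℤ)) / (ρ - 1) with hD
  set y : Fin (N + 1) → ℝ := fun i => f (xequi N i)
  set b : Fin (M + 1) → ℝ := fun j => a j
  have hσ : 0 < sigmaMin (chebVand N M) := sigmaMin_pos fun _ => chebVand_mulVec_eq_zero hMN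
  have hresidual (i : Fin (N + 1)) : |(y - chebVand N M *ᵥ b) i| ≤ D := by
    rw [Pi.sub_apply, chebVand_mulVec_apply,
      Fin.sum_univ_eq_sum_range (fun n => a n * cheb n (xequi N i))]
    exact abs_sub_sum_range_mul_cheb_le hρ M (xequi_mem_Icc N i) (hf _ (xequi_mem_Icc N i))
      fun n hn => ha n (by omega)
  have herror : |(c - b) k| ≤ √((N : ℝ) + 1) * D / sigmaMin (chebVand N M) :=
    (abs_le_enorm2 _ k).trans <| (enorm2_sub_le_of_normal_eq hσ hc b).trans <|
      div_le_div_of_nonneg_right (by exact_mod_cast enorm2_le_sqrt_mul_of_forall_abs_le hresidual)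
        hσ.le
  have hcoeff : |a k| ≤ 2 * Q * ρ ^ (-((k : ℕ) : ℤ)) := by
    rcases Nat.eq_zero_or_pos k with hk | hk
    · rw [hk]
      simp only [Nat.cast_zero, neg_zero, zpow_zero, mul_one]
      linarith
    · exact ha k hk
  calc |c k| = |b k + (c - b) k| := by simp
    _ ≤ |b k| + |(c - b) k| := abs_add_le _ _
    _ ≤ 2 * Q * ρ ^ (-((k : ℕ) : ℤ)) + √((N : ℝ) + 1) * D / sigmaMin (chebVand N M) :=
        add_le_add hcoeff herror
    _ = _ := by rw [hD]; ring

/-- **Theorem 4.1 of the paper, coefficient bound**: if `f(x) = Σ a_n T_n(x)` on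
`[-1,1]` with `|a_0| ≤ Q`, `|a_n| ≤ 2Qρ^{-n}`, and `c` solves the unperturbed normal
equations for degree-`M` least squares fitting at `N+1` equally spaced points, then
`|c_k| ≤ 2Q [ρ^{-k} + (√(N+1)/σ_{M+1}(T_M(x^equi))) ρ^{-M}/(ρ−1)]` for `0 ≤ k ≤ M`. -/
theorem least_squares_coefficient_bound (ρ Q : ℝ) (hρ : 1 < ρ) (hQ : 0 < Q)
    (M N : ℕ) (hMN : M ≤ N) (hN : 1 ≤ N)
    (f : ℝ → ℝ) (a : ℕ → ℝ)
    (hf : ∀ x ∈ Set.Icc (-1 : ℝ) 1, HasSum (fun n : ℕ => a n * cheb n x) (f x))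
    (ha0 : |a 0| ≤ Q)
    (ha : ∀ n : ℕ, 1 ≤ n → |a n| ≤ 2 * Q * ρ ^ (-(n : ℤ)))
    (c : Fin (M + 1) → ℝ)
    (hc : ((chebVand N M).transpose * chebVand N M) *ᵥ c =
      (chebVand N M).transpose *ᵥ (fun i => f (xequi N i))) :
    ∀ k : Fin (M + 1),
      |c k| ≤ 2 * Q * (ρ ^ (-((k : ℕ) : ℤ)) +
        Real.sqrt ((N : ℝ) + 1) / sigmaMin (chebVand N M) * (ρ ^ (-(M : ℤ)) / (ρ - 1))) :=
  least_squares_coefficient_bound_general ρ Q hρ hQ M N hMN f a hf ha0 ha c hc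
end

section
/- Let M ≤ N be nonnegative integers with N ≥ 1. Let D be the (M+1)×(M+1) diagonal matrix with diagonal entries D_{mm} = N/(2m+1) for 0 ≤ m ≤ M, and let C be the (M+1)×(M+1) matrix with C_{mn} = 1 if m+n is even and C_{mn} = 0 if m+n is odd. Then every eigenvalue λ of the symmetric matrix D + C satisfies (N − M²/2)/(2M+1) ≤ λ ≤ (2N + M + 3)/2. Equivalently, for every v ∈ ℝ^{M+1}, ((N − M²/2)/(2M+1)) ‖v‖₂² ≤ vᵀ(D+C)v ≤ ((2N + M + 3)/2) ‖v‖₂². -/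
open Matrix MeasureTheory
open scoped BigOperators

/-!
Split the indices by parity: with `e`, `o` the indicator vectors of the even and odd indices,
`C = e eᵀ + o oᵀ`, so `vᵀ C v = (e ⬝ v)² + (o ⬝ v)² ≥ 0` and `vᵀ(D + C)v ≥ vᵀ D v ≥ N/(2M+1) ‖v‖²`.
Conversely `vᵀ D v ≤ N ‖v‖²`, and Cauchy–Schwarz on each parity class, which has at most
`(M + 2)/2` elements, gives `vᵀ C v ≤ (M + 2)/2 ‖v‖²`. For an eigenvector, `vᵀ(D + C)v = λ ‖v‖²`.
-/

open Finset

section QuadraticForms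

variable {ι : Type*} [Fintype ι]

theorem sum_sq_pos_of_ne_zero {v : ι → ℝ} (hv : v ≠ 0) : 0 < ∑ i, v i ^ 2 := by
  obtain ⟨i, hi⟩ := Function.ne_iff.mp hv
  exact sum_pos' (fun j _ => sq_nonneg (v j)) ⟨i, mem_univ i, sq_pos_of_ne_zero hi⟩

theorem dotProduct_mulVec_eq_of_mulVec_eq_smul {A : Matrix ι ι ℝ} {v : ι → ℝ} {lam : ℝ}
    (h : A *ᵥ v = lam • v) : v ⬝ᵥ (A *ᵥ v) = lam * ∑ i, v i ^ 2 := by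
  simp only [h, dotProduct, Pi.smul_apply, smul_eq_mul, mul_sum]
  exact sum_congr rfl fun i _ => by ring

theorem dotProduct_diagonal_mulVec [DecidableEq ι] (d v : ι → ℝ) :
    v ⬝ᵥ (diagonal d *ᵥ v) = ∑ i, d i * v i ^ 2 := by
  simp only [dotProduct, mulVec_diagonal]
  exact sum_congr rfl fun i _ => by ring

theorem dotProduct_iff_mulVec (p : ι → Prop) [DecidablePred p] (v : ι → ℝ) :
    v ⬝ᵥ ((of fun i j => if (p i ↔ p j) then (1 : ℝ) else 0) *ᵥ v) =
      (∑ i with p i, v i) ^ 2 + (∑ i with ¬p i, v i) ^ 2 := by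
  rw [sum_filter, sum_filter, sq, sq, sum_mul_sum, sum_mul_sum, ← sum_add_distrib]
  simp only [dotProduct, mulVec, of_apply, mul_sum, ← sum_add_distrib]
  refine sum_congr rfl fun i _ => sum_congr rfl fun j _ => ?_
  by_cases hi : p i <;> by_cases hj : p j <;> simp [hi, hj]

theorem sq_sum_filter_add_sq_sum_filter_not_le (p : ι → Prop) [DecidablePred p] (v : ι → ℝ)
    {c : ℝ} (hp : (#{i | p i} : ℝ) ≤ c) (hnp : (#{i | ¬p i} : ℝ) ≤ c) :
    (∑ i with p i, v i) ^ 2 + (∑ i with ¬p i, v i) ^ 2 ≤ c * ∑ i, v i ^ 2 := by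
  have hsplit := sum_filter_add_sum_filter_not univ p fun i => v i ^ 2
  calc (∑ i with p i, v i) ^ 2 + (∑ i with ¬p i, v i) ^ 2
      ≤ #{i | p i} * ∑ i with p i, v i ^ 2 + #{i | ¬p i} * ∑ i with ¬p i, v i ^ 2 :=
        add_le_add sq_sum_le_card_mul_sum_sq sq_sum_le_card_mul_sum_sq
    _ ≤ c * ∑ i with p i, v i ^ 2 + c * ∑ i with ¬p i, v i ^ 2 := by
        gcongr
    _ = c * ∑ i, v i ^ 2 := by rw [← mul_add, hsplit]

end QuadraticForms

theorem card_filter_mod_two_eq_le (k r : ℕ) : #{m : Fin k | (m : ℕ) % 2 = r} ≤ (k + 1) / 2 := by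
  have h := card_le_card_of_injOn (fun m : Fin k => (m : ℕ) / 2)
    (s := {m : Fin k | (m : ℕ) % 2 = r}) (t := range ((k + 1) / 2))
    (fun m _ => by have := m.isLt; simp only [coe_range, Set.mem_Iio]; omega)
    (fun a ha b hb hab => Fin.ext (by
      simp only [coe_filter, mem_univ, true_and, Set.mem_ofPred_eq] at ha hb hab; omega))
  simpa using h

/-- The matrix `D + C` of the theorem. -/
noncomputable def legendreGram (M N : ℕ) : Matrix (Fin (M + 1)) (Fin (M + 1)) ℝ :=
  of fun m n => (if m = n then (N : ℝ) / (2 * (m : ℕ) + 1) else 0) +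
    (if ((m : ℕ) + (n : ℕ)) % 2 = 0 then (1 : ℝ) else 0)

theorem legendreGram_eq (M N : ℕ) :
    legendreGram M N = diagonal (fun m : Fin (M + 1) => (N : ℝ) / (2 * (m : ℕ) + 1)) +
      of fun m n : Fin (M + 1) => if ((m : ℕ) % 2 = 0 ↔ (n : ℕ) % 2 = 0) then 1 else 0 := by
  ext m n
  have : ((m : ℕ) + n) % 2 = 0 ↔ ((m : ℕ) % 2 = 0 ↔ (n : ℕ) % 2 = 0) := by omega
  simp [legendreGram, diagonal_apply, this]

theorem dotProduct_legendreGram_mulVec (M N : ℕ) (v : Fin (M + 1) → ℝ) :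
    v ⬝ᵥ (legendreGram M N *ᵥ v) = ∑ m : Fin (M + 1), (N : ℝ) / (2 * (m : ℕ) + 1) * v m ^ 2 +
      ((∑ m ∈ {m : Fin (M + 1) | (m : ℕ) % 2 = 0}, v m) ^ 2 +
        (∑ m ∈ {m : Fin (M + 1) | ¬(m : ℕ) % 2 = 0}, v m) ^ 2) := by
  rw [legendreGram_eq, add_mulVec, dotProduct_add, dotProduct_diagonal_mulVec,
    dotProduct_iff_mulVec]

theorem le_dotProduct_legendreGram_mulVec (M N : ℕ) (v : Fin (M + 1) → ℝ) :
    ((N : ℝ) - (M : ℝ) ^ 2 / 2) / (2 * (M : ℝ) + 1) * ∑ i, v i ^ 2 ≤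
      v ⬝ᵥ (legendreGram M N *ᵥ v) := by
  have hdiag : ∀ m : Fin (M + 1),
      ((N : ℝ) - (M : ℝ) ^ 2 / 2) / (2 * (M : ℝ) + 1) ≤ (N : ℝ) / (2 * (m : ℕ) + 1) := by
    intro m
    have hm : ((m : ℕ) : ℝ) ≤ M := by exact_mod_cast Nat.lt_succ_iff.mp m.isLt
    calc ((N : ℝ) - (M : ℝ) ^ 2 / 2) / (2 * (M : ℝ) + 1) ≤ (N : ℝ) / (2 * (M : ℝ) + 1) := by
          gcongr; exact sub_le_self _ (by positivity)
      _ ≤ (N : ℝ) / (2 * (m : ℕ) + 1) := by gcongr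
  rw [dotProduct_legendreGram_mulVec, mul_sum]
  have hdiag_sum := sum_le_sum fun m (_ : m ∈ univ) =>
    mul_le_mul_of_nonneg_right (hdiag m) (sq_nonneg (v m))
  linarith [sq_nonneg (∑ m ∈ {m : Fin (M + 1) | (m : ℕ) % 2 = 0}, v m),
    sq_nonneg (∑ m ∈ {m : Fin (M + 1) | ¬(m : ℕ) % 2 = 0}, v m)]

theorem dotProduct_legendreGram_mulVec_le (M N : ℕ) (v : Fin (M + 1) → ℝ) :
    v ⬝ᵥ (legendreGram M N *ᵥ v) ≤ (2 * (N : ℝ) + (M : ℝ) + 3) / 2 * ∑ i, v i ^ 2 := by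
  have hdiag : ∑ m : Fin (M + 1), (N : ℝ) / (2 * (m : ℕ) + 1) * v m ^ 2 ≤ N * ∑ i, v i ^ 2 := by
    rw [mul_sum]
    refine sum_le_sum fun m _ => mul_le_mul_of_nonneg_right ?_ (sq_nonneg (v m))
    exact div_le_self (Nat.cast_nonneg N) (by linarith [(m : ℕ).cast_nonneg (α := ℝ)])
  have hcard : ∀ r : ℕ,
      (#{m : Fin (M + 1) | (m : ℕ) % 2 = r} : ℝ) ≤ ((M : ℝ) + 3) / 2 := by
    intro r
    have h2 : 2 * #{m : Fin (M + 1) | (m : ℕ) % 2 = r} ≤ M + 3 := by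
      have := card_filter_mod_two_eq_le (M + 1) r; omega
    have h2' : (2 * #{m : Fin (M + 1) | (m : ℕ) % 2 = r} : ℝ) ≤ M + 3 := by exact_mod_cast h2
    linarith
  have hodd : #{m : Fin (M + 1) | ¬(m : ℕ) % 2 = 0} = #{m : Fin (M + 1) | (m : ℕ) % 2 = 1} := by
    congr 1; exact filter_congr fun m _ => by omega
  have hparity := sq_sum_filter_add_sq_sum_filter_not_le (fun m : Fin (M + 1) => (m : ℕ) % 2 = 0)
    v (hcard 0) (hodd ▸ hcard 1)
  rw [dotProduct_legendreGram_mulVec]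
  linarith

theorem legendre_gram_eigenvalue_bounds_general (M N : ℕ) :
    (∀ (lam : ℝ) (v : Fin (M + 1) → ℝ), v ≠ 0 →
      (Matrix.of fun m n : Fin (M + 1) =>
          (if m = n then (N : ℝ) / (2 * (m : ℕ) + 1) else 0) +
            (if ((m : ℕ) + (n : ℕ)) % 2 = 0 then (1 : ℝ) else 0)) *ᵥ v = lam • v →
      ((N : ℝ) - (M : ℝ) ^ 2 / 2) / (2 * (M : ℝ) + 1) ≤ lam ∧
        lam ≤ (2 * (N : ℝ) + (M : ℝ) + 3) / 2) ∧
    ∀ v : Fin (M + 1) → ℝ,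
      ((N : ℝ) - (M : ℝ) ^ 2 / 2) / (2 * (M : ℝ) + 1) * (∑ i, v i ^ 2) ≤
        v ⬝ᵥ ((Matrix.of fun m n : Fin (M + 1) =>
          (if m = n then (N : ℝ) / (2 * (m : ℕ) + 1) else 0) +
            (if ((m : ℕ) + (n : ℕ)) % 2 = 0 then (1 : ℝ) else 0)) *ᵥ v) ∧
      v ⬝ᵥ ((Matrix.of fun m n : Fin (M + 1) =>
          (if m = n then (N : ℝ) / (2 * (m : ℕ) + 1) else 0) +
            (if ((m : ℕ) + (n : ℕ)) % 2 = 0 then (1 : ℝ) else 0)) *ᵥ v) ≤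
        (2 * (N : ℝ) + (M : ℝ) + 3) / 2 * (∑ i, v i ^ 2) := by
  refine ⟨fun lam v hv hAv => ?_, fun v =>
    ⟨le_dotProduct_legendreGram_mulVec M N v, dotProduct_legendreGram_mulVec_le M N v⟩⟩
  have hform := dotProduct_mulVec_eq_of_mulVec_eq_smul (A := legendreGram M N) hAv
  have hpos := sum_sq_pos_of_ne_zero hv
  have hlow := le_dotProduct_legendreGram_mulVec M N v
  have hup := dotProduct_legendreGram_mulVec_le M N v
  rw [hform] at hlow hup
  exact ⟨le_of_mul_le_mul_right hlow hpos, le_of_mul_le_mul_right hup hpos⟩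

/-- **Lemma A.2 of the paper**: with `D = diag(N/(2m+1))_{m=0}^M` and
`C_{mn} = 1` if `m+n` even, `0` otherwise, every eigenvalue `λ` of the symmetric
matrix `D + C` satisfies `(N − M²/2)/(2M+1) ≤ λ ≤ (2N+M+3)/2`; equivalently the
quadratic form `vᵀ(D+C)v` is pinched between these multiples of `‖v‖₂²`. -/
theorem legendre_gram_eigenvalue_bounds (M N : ℕ) (hMN : M ≤ N) (hN : 1 ≤ N) :
    (∀ (lam : ℝ) (v : Fin (M + 1) → ℝ), v ≠ 0 →
      (Matrix.of fun m n : Fin (M + 1) =>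
          (if m = n then (N : ℝ) / (2 * (m : ℕ) + 1) else 0) +
            (if ((m : ℕ) + (n : ℕ)) % 2 = 0 then (1 : ℝ) else 0)) *ᵥ v = lam • v →
      ((N : ℝ) - (M : ℝ) ^ 2 / 2) / (2 * (M : ℝ) + 1) ≤ lam ∧
        lam ≤ (2 * (N : ℝ) + (M : ℝ) + 3) / 2) ∧
    ∀ v : Fin (M + 1) → ℝ,
      ((N : ℝ) - (M : ℝ) ^ 2 / 2) / (2 * (M : ℝ) + 1) * (∑ i, v i ^ 2) ≤
        v ⬝ᵥ ((Matrix.of fun m n : Fin (M + 1) =>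
          (if m = n then (N : ℝ) / (2 * (m : ℕ) + 1) else 0) +
            (if ((m : ℕ) + (n : ℕ)) % 2 = 0 then (1 : ℝ) else 0)) *ᵥ v) ∧
      v ⬝ᵥ ((Matrix.of fun m n : Fin (M + 1) =>
          (if m = n then (N : ℝ) / (2 * (m : ℕ) + 1) else 0) +
            (if ((m : ℕ) + (n : ℕ)) % 2 = 0 then (1 : ℝ) else 0)) *ᵥ v) ≤
        (2 * (N : ℝ) + (M : ℝ) + 3) / 2 * (∑ i, v i ^ 2) :=
  legendre_gram_eigenvalue_bounds_general M N
end

section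
/- Let M ≤ N be nonnegative integers with N ≥ 1. Let F be the (M+1)×(M+1) matrix with F_{mn} = (N/2) ∫_{-1}^1 T_m(x) T_n(x) dx, i.e., F_{mn} = (N/2)[1/(1−(m+n)²) + 1/(1−(m−n)²)] when m+n is even and F_{mn} = 0 when m+n is odd, and let C be the (M+1)×(M+1) matrix with C_{mn} = 1 if m+n is even and C_{mn} = 0 otherwise. Then the largest eigenvalue of the symmetric matrix F + C satisfies λ₁(F + C) ≤ (4N + M + 1)/2; equivalently, vᵀ(F+C)v ≤ ((4N+M+1)/2) ‖v‖₂² for every v ∈ ℝ^{M+1}. -/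
open Matrix MeasureTheory
open scoped BigOperators

/-! By Schur's test, the quadratic form of a symmetric matrix is bounded by its largest absolute
row sum. In row `m`, the parity matrix `C` contributes at most `(M + 2) / 2`. The entries of `F`
are `N/2` times `±w (m + n) ± w |m - n|`, where `w 0 = 1` and `w k = 1 / (k² - 1)` for even `k ≥ 2`.
These weights telescope to `1/2` over `k ≥ 1`, so `F` contributes at most `3N/2`, and
`(M + 2 + 3N) / 2 ≤ (4N + M + 1) / 2` because `N ≥ 1`. -/

open Finset

section QuadraticForm

variable {ι : Type*} [Fintype ι]

/-- Schur's test for a symmetric matrix: `2 |vᵢ Aᵢⱼ vⱼ| ≤ |Aᵢⱼ| vᵢ² + |Aⱼᵢ| vⱼ²`, and summing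
the second term over `i` first gives the first term back. -/
theorem dotProduct_mulVec_le_of_sum_abs_le {A : Matrix ι ι ℝ} (hA : A.IsSymm) {B : ℝ}
    (hB : ∀ i, ∑ j, |A i j| ≤ B) (v : ι → ℝ) :
    v ⬝ᵥ (A *ᵥ v) ≤ B * ∑ i, v i ^ 2 := by
  have hterm : ∀ i j, v i * (A i j * v j) ≤ |A i j| * v i ^ 2 / 2 + |A j i| * v j ^ 2 / 2 := by
    intro i j
    rw [hA.apply i j]
    nlinarith [abs_nonneg (A i j), abs_mul_abs_self (A i j), sq_nonneg (v i - v j),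
      sq_nonneg (v i + v j), le_abs_self (A i j), neg_abs_le (A i j)]
  calc v ⬝ᵥ (A *ᵥ v) = ∑ i, ∑ j, v i * (A i j * v j) := by
        simp only [dotProduct, mulVec, mul_sum]
    _ ≤ ∑ i, ∑ j, (|A i j| * v i ^ 2 / 2 + |A j i| * v j ^ 2 / 2) := by
        gcongr with i _ j _
        exact hterm i j
    _ = ∑ i, v i ^ 2 * ∑ j, |A i j| := by
        have hswap : ∑ i, ∑ j, |A j i| * v j ^ 2 / 2 = ∑ i, ∑ j, |A i j| * v i ^ 2 / 2 :=
          sum_comm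
        simp only [sum_add_distrib, hswap, mul_sum]
        rw [← sum_add_distrib]
        refine sum_congr rfl fun i _ => ?_
        rw [← sum_add_distrib]
        exact sum_congr rfl fun j _ => by ring
    _ ≤ ∑ i, v i ^ 2 * B := by gcongr with i _; exact hB i
    _ = B * ∑ i, v i ^ 2 := by rw [← sum_mul, mul_comm]

theorem le_of_mulVec_eq_smul_of_dotProduct_mulVec_le {A : Matrix ι ι ℝ} {v : ι → ℝ} {lam B : ℝ}
    (hv : v ≠ 0) (hAv : A *ᵥ v = lam • v) (hB : v ⬝ᵥ (A *ᵥ v) ≤ B * ∑ i, v i ^ 2) :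
    lam ≤ B := by
  have hvv : v ⬝ᵥ v = ∑ i, v i ^ 2 := by simp only [dotProduct, sq]
  have hpos : 0 < v ⬝ᵥ v :=
    lt_of_le_of_ne (hvv ▸ sum_nonneg fun i _ => sq_nonneg (v i))
      (Ne.symm (dotProduct_self_eq_zero.not.mpr hv))
  rw [hAv, dotProduct_smul, smul_eq_mul, ← hvv] at hB
  exact le_of_mul_le_mul_right hB hpos

end QuadraticForm

/-- `chebWeight k = |½ ∫₋₁¹ T_k|`: the integral is `2 / (1 - k²)` for even `k`, `0` for odd `k`. -/
noncomputable def chebWeight (k : ℕ) : ℝ :=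
  if Even k then |1 / (1 - (k : ℝ) ^ 2)| else 0

lemma chebWeight_nonneg (k : ℕ) : 0 ≤ chebWeight k := by
  unfold chebWeight
  split_ifs <;> positivity

lemma chebWeight_zero : chebWeight 0 = 1 := by
  simp [chebWeight]

/-- Telescoping form of `1 / ((2j+1)(2j+3)) = ½ (1 / (2j+1) - 1 / (2j+3))`. -/
lemma chebWeight_succ (k : ℕ) :
    chebWeight (k + 1) = ((2 * (k / 2 : ℕ) + 1 : ℝ)⁻¹ - (2 * ((k + 1) / 2 : ℕ) + 1 : ℝ)⁻¹) / 2 := by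
  obtain ⟨j, rfl | rfl⟩ := Nat.even_or_odd' k
  · have hdiv : (2 * j + 1) / 2 = j := by omega
    have hodd : ¬Even (2 * j + 1) := Nat.not_even_iff_odd.mpr (odd_two_mul_add_one j)
    simp [chebWeight, hdiv, hodd]
  · have hdiv : (2 * j + 1) / 2 = j := by omega
    have hdiv' : (2 * j + 1 + 1) / 2 = j + 1 := by omega
    have heven : Even (2 * j + 1 + 1) := ⟨j + 1, by ring⟩
    have hj : (0 : ℝ) ≤ j := j.cast_nonneg
    have hneg : 1 - ((2 * j + 1 + 1 : ℕ) : ℝ) ^ 2 < 0 := by push_cast; nlinarith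
    rw [chebWeight, if_pos heven, abs_of_neg (one_div_neg.mpr hneg), hdiv, hdiv']
    have hne : 1 - ((2 * j + 1 + 1 : ℕ) : ℝ) ^ 2 ≠ 0 := hneg.ne
    push_cast at hne ⊢
    field_simp
    ring

lemma sum_range_chebWeight_succ_le (L : ℕ) : ∑ k ∈ range L, chebWeight (k + 1) ≤ 1 / 2 := by
  simp only [chebWeight_succ, ← sum_div]
  rw [sum_range_sub' (fun k => (2 * (k / 2 : ℕ) + 1 : ℝ)⁻¹)]
  have : (0 : ℝ) ≤ (2 * (L / 2 : ℕ) + 1 : ℝ)⁻¹ := by positivity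
  norm_num
  linarith

lemma sum_range_chebWeight_le (L : ℕ) : ∑ k ∈ range L, chebWeight k ≤ 3 / 2 := by
  cases L with
  | zero => norm_num
  | succ L =>
    rw [sum_range_succ', chebWeight_zero]
    linarith [sum_range_chebWeight_succ_le L]

lemma sum_range_chebWeight_add_le {m : ℕ} (hm : 0 < m) (K : ℕ) :
    ∑ n ∈ range K, chebWeight (m + n) ≤ 1 / 2 := by
  obtain ⟨m, rfl⟩ := Nat.exists_eq_add_one_of_ne_zero hm.ne'
  have hsplit := sum_range_add (fun k => chebWeight (k + 1)) m K
  have hhead : 0 ≤ ∑ k ∈ range m, chebWeight (k + 1) :=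
    sum_nonneg fun k _ => chebWeight_nonneg _
  have hshift : ∀ n, chebWeight (m + 1 + n) = chebWeight (m + n + 1) := fun n => by
    rw [add_right_comm]
  simp only [hshift]
  linarith [sum_range_chebWeight_succ_le (m + K)]

/-- The indices `n < m` contribute the reflected tail `chebWeight 1, …, chebWeight m`. -/
lemma sum_range_chebWeight_dist_le (m K : ℕ) :
    ∑ n ∈ range K, chebWeight (Nat.dist m n) ≤
      ∑ k ∈ range m, chebWeight (k + 1) + 3 / 2 := by
  calc ∑ n ∈ range K, chebWeight (Nat.dist m n)
      ≤ ∑ n ∈ range (m + K), chebWeight (Nat.dist m n) :=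
        sum_le_sum_of_subset_of_nonneg (range_subset_range.mpr (by omega))
          fun n _ _ => chebWeight_nonneg _
    _ = ∑ k ∈ range m, chebWeight (k + 1) + ∑ k ∈ range K, chebWeight k := by
        rw [sum_range_add, ← sum_range_reflect]
        congr 1
        · refine sum_congr rfl fun k hk => ?_
          rw [mem_range] at hk
          congr 1
          rw [Nat.dist_eq_sub_of_le_right (by omega)]
          omega
        · refine sum_congr rfl fun k _ => ?_
          rw [Nat.dist_eq_sub_of_le (by omega), Nat.add_sub_cancel_left]
    _ ≤ _ := by linarith [sum_range_chebWeight_le K]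

lemma sum_range_chebWeight_add_add_dist_le (m K : ℕ) :
    ∑ n ∈ range K, (chebWeight (m + n) + chebWeight (Nat.dist m n)) ≤ 3 := by
  rw [sum_add_distrib]
  rcases Nat.eq_zero_or_pos m with rfl | hm
  · simp only [zero_add, Nat.dist_zero_left]
    linarith [sum_range_chebWeight_le K]
  · linarith [sum_range_chebWeight_add_le hm K, sum_range_chebWeight_dist_le m K,
      sum_range_chebWeight_succ_le m]

lemma sum_range_ite_even_add_le (m K : ℕ) :
    ∑ n ∈ range K, (if (m + n) % 2 = 0 then (1 : ℝ) else 0) ≤ (K + 1) / 2 := by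
  induction K using Nat.twoStepInduction with
  | zero => norm_num
  | one => rw [sum_range_one]; split_ifs <;> norm_num
  | more K ih _ =>
    rw [sum_range_succ, sum_range_succ]
    have hpair : (if (m + K) % 2 = 0 then (1 : ℝ) else 0) +
        (if (m + (K + 1)) % 2 = 0 then 1 else 0) = 1 := by
      split_ifs <;> norm_num <;> omega
    push_cast
    linarith

noncomputable def chebGramEntry (N m n : ℕ) : ℝ :=
  (if (m + n) % 2 = 0 then
      (N : ℝ) / 2 * (1 / (1 - ((m : ℝ) + (n : ℝ)) ^ 2) + 1 / (1 - ((m : ℝ) - (n : ℝ)) ^ 2))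
    else 0) + (if (m + n) % 2 = 0 then (1 : ℝ) else 0)

lemma chebGramEntry_comm (N m n : ℕ) : chebGramEntry N m n = chebGramEntry N n m := by
  simp only [chebGramEntry, add_comm n m]
  congr 3
  ring

lemma abs_chebGramEntry_le (N m n : ℕ) :
    |chebGramEntry N m n| ≤ (if (m + n) % 2 = 0 then (1 : ℝ) else 0) +
      N / 2 * (chebWeight (m + n) + chebWeight (Nat.dist m n)) := by
  have hw : 0 ≤ (N : ℝ) / 2 * (chebWeight (m + n) + chebWeight (Nat.dist m n)) := by
    have := chebWeight_nonneg (m + n)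
    have := chebWeight_nonneg (Nat.dist m n)
    positivity
  unfold chebGramEntry
  split_ifs with hpar
  · have hadd : chebWeight (m + n) = |1 / (1 - ((m : ℝ) + n) ^ 2)| := by
      rw [chebWeight, if_pos (Nat.even_iff.mpr hpar)]
      push_cast
      rfl
    have hdist : chebWeight (Nat.dist m n) = |1 / (1 - ((m : ℝ) - n) ^ 2)| := by
      have hcast : ((Nat.dist m n : ℕ) : ℝ) ^ 2 = ((m : ℝ) - n) ^ 2 := by
        rcases le_total m n with h | h
        · rw [Nat.dist_eq_sub_of_le h, Nat.cast_sub h]; ring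
        · rw [Nat.dist_eq_sub_of_le_right h, Nat.cast_sub h]
      have heven : Even (Nat.dist m n) := by
        rw [Nat.even_iff]
        rcases le_total m n with h | h
        · rw [Nat.dist_eq_sub_of_le h]; omega
        · rw [Nat.dist_eq_sub_of_le_right h]; omega
      rw [chebWeight, if_pos heven, hcast]
    rw [hadd, hdist]
    calc _ ≤ |(N : ℝ) / 2 * (1 / (1 - ((m : ℝ) + n) ^ 2) + 1 / (1 - ((m : ℝ) - n) ^ 2))| + |1| :=
          abs_add_le _ _
      _ ≤ _ := by
          rw [abs_mul, abs_of_nonneg (by positivity : (0 : ℝ) ≤ N / 2), abs_one, add_comm]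
          gcongr
          exact abs_add_le _ _
  · rw [add_zero, abs_zero, zero_add]
    exact hw

lemma sum_range_abs_chebGramEntry_le (N m K : ℕ) :
    ∑ n ∈ range K, |chebGramEntry N m n| ≤ (K + 1) / 2 + 3 * N / 2 := by
  calc ∑ n ∈ range K, |chebGramEntry N m n|
      ≤ ∑ n ∈ range K, ((if (m + n) % 2 = 0 then (1 : ℝ) else 0) +
          N / 2 * (chebWeight (m + n) + chebWeight (Nat.dist m n))) :=
        sum_le_sum fun n _ => abs_chebGramEntry_le N m n
    _ = ∑ n ∈ range K, (if (m + n) % 2 = 0 then (1 : ℝ) else 0) +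
          N / 2 * ∑ n ∈ range K, (chebWeight (m + n) + chebWeight (Nat.dist m n)) := by
        rw [sum_add_distrib, mul_sum]
    _ ≤ (K + 1) / 2 + N / 2 * 3 := by
        gcongr
        · exact sum_range_ite_even_add_le m K
        · exact sum_range_chebWeight_add_add_dist_le m K
    _ = (K + 1) / 2 + 3 * N / 2 := by ring

theorem chebyshev_gram_eigenvalue_bound_general (M N : ℕ) (hN : 1 ≤ N) :
    (∀ (lam : ℝ) (v : Fin (M + 1) → ℝ), v ≠ 0 →
      (Matrix.of fun m n : Fin (M + 1) =>
          (if ((m : ℕ) + (n : ℕ)) % 2 = 0 then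
            (N : ℝ) / 2 * (1 / (1 - ((m : ℝ) + (n : ℝ)) ^ 2) +
              1 / (1 - ((m : ℝ) - (n : ℝ)) ^ 2)) else 0) +
            (if ((m : ℕ) + (n : ℕ)) % 2 = 0 then (1 : ℝ) else 0)) *ᵥ v = lam • v →
      lam ≤ (4 * (N : ℝ) + (M : ℝ) + 1) / 2) ∧
    ∀ v : Fin (M + 1) → ℝ,
      v ⬝ᵥ ((Matrix.of fun m n : Fin (M + 1) =>
          (if ((m : ℕ) + (n : ℕ)) % 2 = 0 then
            (N : ℝ) / 2 * (1 / (1 - ((m : ℝ) + (n : ℝ)) ^ 2) +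
              1 / (1 - ((m : ℝ) - (n : ℝ)) ^ 2)) else 0) +
            (if ((m : ℕ) + (n : ℕ)) % 2 = 0 then (1 : ℝ) else 0)) *ᵥ v) ≤
        (4 * (N : ℝ) + (M : ℝ) + 1) / 2 * (∑ i, v i ^ 2) := by
  let A : Matrix (Fin (M + 1)) (Fin (M + 1)) ℝ := Matrix.of fun m n => chebGramEntry N m n
  have hsymm : A.IsSymm := Matrix.IsSymm.ext fun m n => chebGramEntry_comm N n m
  have hrow : ∀ m, ∑ n, |A m n| ≤ (4 * (N : ℝ) + M + 1) / 2 := by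
    intro m
    have hN' : (1 : ℝ) ≤ N := by exact_mod_cast hN
    have := sum_range_abs_chebGramEntry_le N m (M + 1)
    rw [← Fin.sum_univ_eq_sum_range] at this
    push_cast at this
    simp only [A, Matrix.of_apply]
    linarith
  have hquad := dotProduct_mulVec_le_of_sum_abs_le hsymm hrow
  exact ⟨fun lam v hv hAv => le_of_mulVec_eq_smul_of_dotProduct_mulVec_le hv hAv (hquad v), hquad⟩

/-- **Lemma A.3 of the paper**: with
`F_{mn} = (N/2)[1/(1−(m+n)²) + 1/(1−(m−n)²)]` when `m+n` is even and `0` otherwise,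
and `C_{mn} = 1` if `m+n` even, `0` otherwise, the largest eigenvalue of the
symmetric matrix `F + C` is at most `(4N+M+1)/2`; equivalently
`vᵀ(F+C)v ≤ ((4N+M+1)/2) ‖v‖₂²` for every `v`. -/
theorem chebyshev_gram_eigenvalue_bound (M N : ℕ) (hMN : M ≤ N) (hN : 1 ≤ N) :
    (∀ (lam : ℝ) (v : Fin (M + 1) → ℝ), v ≠ 0 →
      (Matrix.of fun m n : Fin (M + 1) =>
          (if ((m : ℕ) + (n : ℕ)) % 2 = 0 then
            (N : ℝ) / 2 * (1 / (1 - ((m : ℝ) + (n : ℝ)) ^ 2) +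
              1 / (1 - ((m : ℝ) - (n : ℝ)) ^ 2)) else 0) +
            (if ((m : ℕ) + (n : ℕ)) % 2 = 0 then (1 : ℝ) else 0)) *ᵥ v = lam • v →
      lam ≤ (4 * (N : ℝ) + (M : ℝ) + 1) / 2) ∧
    ∀ v : Fin (M + 1) → ℝ,
      v ⬝ᵥ ((Matrix.of fun m n : Fin (M + 1) =>
          (if ((m : ℕ) + (n : ℕ)) % 2 = 0 then
            (N : ℝ) / 2 * (1 / (1 - ((m : ℝ) + (n : ℝ)) ^ 2) +
              1 / (1 - ((m : ℝ) - (n : ℝ)) ^ 2)) else 0) +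
            (if ((m : ℕ) + (n : ℕ)) % 2 = 0 then (1 : ℝ) else 0)) *ᵥ v) ≤
        (4 * (N : ℝ) + (M : ℝ) + 1) / 2 * (∑ i, v i ^ 2) :=
  chebyshev_gram_eigenvalue_bound_general M N hN
end
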